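/- arXiv:math/0504093 — 3 statements merged into one kernel-verified Lean document; each statement's English description precedes it below -/
import Mathlib

section
/- Let A be a commutative local ring with maximal ideal m. If a formal power series f ∈ A[[t]] has at least one coefficient that is a unit of A (equivalently, f ∉ m[[t]]... i.e., some coefficient lies outside m), then f is not a zero divisor in A[[t]]. Consequently every zero divisor of A[[t]] has all its coefficients in m. -/
/-!
Let `𝔪` be the maximal ideal, suppose `g * f = 0`, and let `n` be the first index with
`coeff n f` a unit. Let `I` be the ideal generated by the coefficients of `g`. In the
coefficient of `X ^ (k + n)` in `g * f`, every term other than `coeff k g * coeff n f` lies in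
`𝔪 * I`, either through `coeff j f ∈ 𝔪` for `j < n` or inductively through `coeff i g` for
`i < k`; hence `coeff k g ∈ 𝔪 * I` for all `k`. So `I ≤ 𝔪 • I`, and since `I` is finitely
generated, Nakayama's lemma gives `I = 0`, i.e. `g = 0`.
-/

open PowerSeries
open scoped nonZeroDivisors

namespace PowerSeries

variable {R : Type*} [CommRing R]

theorem coeff_mem_mul_span_coeff_of_mul_eq_zero {J : Ideal R} {f g : R⟦X⟧} {n : ℕ}
    (hfn : IsUnit (coeff n f)) (hfJ : ∀ i < n, coeff i f ∈ J) (hgf : g * f = 0) (k : ℕ) :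
    coeff k g ∈ J * Ideal.span (Set.range fun i ↦ coeff i g) := by
  set I := Ideal.span (Set.range fun i ↦ coeff i g)
  have hgI (i : ℕ) : coeff i g ∈ I := Ideal.subset_span ⟨i, rfl⟩
  induction k using Nat.strong_induction_on with
  | _ k ih =>
    have hsum : ∑ p ∈ (Finset.HasAntidiagonal.antidiagonal (k + n)).erase (k, n),
        coeff p.1 g * coeff p.2 f ∈ J * I := by
      refine Ideal.sum_mem _ fun ⟨i, j⟩ hij ↦ ?_
      obtain ⟨hne, hij⟩ : (i, j) ≠ (k, n) ∧ i + j = k + n := by simpa using hij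
      rcases lt_trichotomy j n with hj | rfl | hj
      · exact Ideal.mul_mem_mul_rev (hfJ j hj) (hgI i)
      · exact absurd (by simpa using hij) hne
      · exact Ideal.mul_mem_right _ _ (ih i (by omega))
    have hkn : coeff k g * coeff n f ∈ J * I := by
      have h0 : coeff (k + n) (g * f) = 0 := by simp [hgf]
      rw [coeff_mul, ← Finset.add_sum_erase _ _
        (by simp : (k, n) ∈ Finset.HasAntidiagonal.antidiagonal (k + n)),
        add_eq_zero_iff_eq_neg] at h0
      exact h0 ▸ neg_mem hsum
    exact (Ideal.mul_unit_mem_iff_mem _ hfn).mp hkn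

section IsLocalRing

variable [IsLocalRing R] [IsNoetherianRing R]

theorem mem_nonZeroDivisors_of_isUnit_coeff {f : R⟦X⟧} {n : ℕ} (hfn : IsUnit (coeff n f)) :
    f ∈ R⟦X⟧⁰ := by
  classical
  have hex : ∃ n, IsUnit (coeff n f) := ⟨n, hfn⟩
  refine mem_nonZeroDivisors_iff_right.2 fun g hgf ↦ ?_
  set I := Ideal.span (Set.range fun i ↦ coeff i g)
  have hI : I ≤ IsLocalRing.maximalIdeal R • I := Ideal.span_le.2 <| by
    rintro _ ⟨k, rfl⟩
    exact coeff_mem_mul_span_coeff_of_mul_eq_zero (Nat.find_spec hex)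
      (fun i hi ↦ (IsLocalRing.mem_maximalIdeal _).2 (Nat.find_min hex hi)) hgf k
  have hI_bot : I = ⊥ := Submodule.eq_bot_of_le_smul_of_le_jacobson_bot _ _
    (IsNoetherian.noetherian I) hI (IsLocalRing.jacobson_eq_maximalIdeal ⊥ bot_ne_top).ge
  ext k
  simpa using hI_bot.le (Ideal.subset_span ⟨k, rfl⟩)

theorem coeff_mem_maximalIdeal_of_notMem_nonZeroDivisors {f : R⟦X⟧} (hf : f ∉ R⟦X⟧⁰)
    (n : ℕ) : coeff n f ∈ IsLocalRing.maximalIdeal R :=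
  of_not_not fun hn ↦
    hf (mem_nonZeroDivisors_of_isUnit_coeff (IsLocalRing.notMem_maximalIdeal.1 hn))

end IsLocalRing

end PowerSeries

/-- Over an Artinian local ring `A`, a formal power series having some unit
coefficient is a non-zerodivisor of `A⟦t⟧`; consequently every zerodivisor of
`A⟦t⟧` has all its coefficients in the maximal ideal. -/
theorem stmt_8 (A : Type*) [CommRing A] [IsLocalRing A] [IsArtinianRing A]
    (f : PowerSeries A) :
    ((∃ n : ℕ, IsUnit (PowerSeries.coeff n f)) →
      f ∈ nonZeroDivisors (PowerSeries A)) ∧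
    (f ∉ nonZeroDivisors (PowerSeries A) →
      ∀ n : ℕ, PowerSeries.coeff n f ∈ IsLocalRing.maximalIdeal A) :=
  ⟨fun ⟨_, hfn⟩ ↦ mem_nonZeroDivisors_of_isUnit_coeff hfn,
    coeff_mem_maximalIdeal_of_notMem_nonZeroDivisors⟩
end

section
/- Let K be a field of characteristic p > 0 and let x_1, …, x_r ∈ K. Define the Moore determinant Δ(x_1, …, x_r) = det(M) where M_{ij} = x_j^{p^{i−1}} for 1 ≤ i, j ≤ r. Then Δ(x_1, …, x_r) ≠ 0 if and only if x_1, …, x_r are linearly independent over the prime field F_p. -/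
/-
A nonzero vector `v` in the kernel of the transposed Moore matrix gives the linearized polynomial
`P = ∑ vᵢ X^{pⁱ}`, which vanishes at every `xⱼ`. Since `y ↦ P(y)` is `𝔽_p`-linear, `P` vanishes on
the whole `𝔽_p`-span of the `xⱼ`; if these are independent that span has `p^r` elements, more than
`deg P < p^r`, so `P = 0`. Conversely, raising an `𝔽_p`-relation `∑ cⱼ xⱼ = 0` to the powers `pⁱ`
shows that `(cⱼ)` is in the kernel of the Moore matrix.
-/

/-- The Moore matrix of `x₁, …, x_r`: its `(i, j)` entry is `x_j ^ (p ^ (i - 1))`. -/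
def mooreMatrix {K : Type*} [Field K] (p : ℕ) {r : ℕ} (x : Fin r → K) :
    Matrix (Fin r) (Fin r) K :=
  Matrix.of fun i j => x j ^ p ^ (i : ℕ)

open Polynomial Matrix

noncomputable def linearizedPoly {R : Type*} [Semiring R] (p : ℕ) {r : ℕ} (v : Fin r → R) : R[X] :=
  ∑ i : Fin r, C (v i) * X ^ p ^ (i : ℕ)

section LinearizedPoly

variable {R : Type*} [Semiring R] {p r : ℕ} (v : Fin r → R)

theorem eval_linearizedPoly (y : R) :
    (linearizedPoly p v).eval y = ∑ i : Fin r, v i * y ^ p ^ (i : ℕ) := by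
  simp [linearizedPoly, eval_finsetSum]

theorem coeff_linearizedPoly_pow (hp : 1 < p) (i : Fin r) :
    (linearizedPoly p v).coeff (p ^ (i : ℕ)) = v i := by
  have hpow : ∀ j : Fin r, p ^ (i : ℕ) = p ^ (j : ℕ) ↔ j = i := fun j =>
    (Nat.pow_right_injective hp).eq_iff.trans (by rw [eq_comm, Fin.val_inj])
  simp [linearizedPoly, coeff_C_mul, coeff_X_pow, hpow]

theorem natDegree_linearizedPoly_lt (hp : 1 < p) : (linearizedPoly p v).natDegree < p ^ r := by
  refine Nat.lt_of_le_sub_one (by positivity) (natDegree_sum_le_of_forall_le _ _ fun i _ => ?_)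
  exact (natDegree_C_mul_le _ _).trans <| natDegree_X_pow_le _ |>.trans <|
    Nat.le_sub_one_of_lt (Nat.pow_lt_pow_right hp i.isLt)

theorem linearizedPoly_eq_zero_iff (hp : 1 < p) : linearizedPoly p v = 0 ↔ v = 0 := by
  refine ⟨fun h => funext fun i => ?_, fun h => by simp [linearizedPoly, h]⟩
  rw [← coeff_linearizedPoly_pow v hp i, h, coeff_zero, Pi.zero_apply]

end LinearizedPoly

section Frobenius

variable {p : ℕ} [Fact p.Prime] {A : Type*} [CommSemiring A] [Algebra (ZMod p) A]

theorem smul_pow_char_pow (c : ZMod p) (y : A) (n : ℕ) : (c • y) ^ p ^ n = c • y ^ p ^ n := by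
  rw [Algebra.smul_def, Algebra.smul_def, mul_pow, ← map_pow, ZMod.pow_card_pow]

variable [ExpChar A p]

theorem sum_smul_pow_char_pow {ι : Type*} (s : Finset ι) (c : ι → ZMod p) (y : ι → A) (n : ℕ) :
    (∑ j ∈ s, c j • y j) ^ p ^ n = ∑ j ∈ s, c j • y j ^ p ^ n := by
  simp only [sum_pow_char_pow, smul_pow_char_pow]

theorem eval_linearizedPoly_sum_smul {r : ℕ} (v : Fin r → A) {ι : Type*} (s : Finset ι)
    (c : ι → ZMod p) (y : ι → A) :
    (linearizedPoly p v).eval (∑ j ∈ s, c j • y j) =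
      ∑ j ∈ s, c j • (linearizedPoly p v).eval (y j) := by
  simp only [eval_linearizedPoly, sum_smul_pow_char_pow, Finset.mul_sum, Finset.smul_sum,
    mul_smul_comm]
  exact Finset.sum_comm

end Frobenius

theorem linearizedPoly_eq_zero_of_eval_eq_zero {p : ℕ} [Fact p.Prime] {R : Type*} [CommRing R]
    [IsDomain R] [Algebra (ZMod p) R] [ExpChar R p] {r : ℕ} {x : Fin r → R}
    (hx : LinearIndependent (ZMod p) x) {v : Fin r → R}
    (hv : ∀ j, (linearizedPoly p v).eval (x j) = 0) : linearizedPoly p v = 0 := by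
  refine eq_zero_of_natDegree_lt_card_of_eval_eq_zero _ hx.fintypeLinearCombination_injective
    (fun c => ?_) ?_
  · simp [Fintype.linearCombination_apply, eval_linearizedPoly_sum_smul, hv]
  · simpa [ZMod.card] using natDegree_linearizedPoly_lt v (Fact.out : p.Prime).one_lt

theorem mooreMatrix_transpose_mulVec {K : Type*} [Field K] (p : ℕ) {r : ℕ} (x v : Fin r → K) :
    (mooreMatrix p x)ᵀ *ᵥ v = fun j => (linearizedPoly p v).eval (x j) := by
  ext j
  simp [Matrix.mulVec, dotProduct, mooreMatrix, eval_linearizedPoly, mul_comm]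

section MooreMatrix

variable {p : ℕ} [Fact p.Prime] {K : Type*} [Field K] [CharP K p] [Algebra (ZMod p) K] {r : ℕ}

theorem mooreMatrix_mulVec_algebraMap (x : Fin r → K) (c : Fin r → ZMod p) :
    mooreMatrix p x *ᵥ (fun j => algebraMap (ZMod p) K (c j)) =
      fun i : Fin r => (∑ j, c j • x j) ^ p ^ (i : ℕ) := by
  ext i
  rw [sum_smul_pow_char_pow]
  simp [Matrix.mulVec, dotProduct, mooreMatrix, Algebra.smul_def, mul_comm]

theorem linearIndependent_of_det_mooreMatrix_ne_zero {x : Fin r → K}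
    (hdet : (mooreMatrix p x).det ≠ 0) : LinearIndependent (ZMod p) x := by
  refine Fintype.linearIndependent_iff.mpr fun c hc => ?_
  have hker : (fun j => algebraMap (ZMod p) K (c j)) = 0 :=
    Matrix.eq_zero_of_mulVec_eq_zero hdet <| by
      rw [mooreMatrix_mulVec_algebraMap, hc]
      exact funext fun i => zero_pow (pow_ne_zero _ (Fact.out : p.Prime).ne_zero)
  exact fun j => (algebraMap (ZMod p) K).injective (by simpa using congrFun hker j)

theorem det_mooreMatrix_ne_zero_of_linearIndependent {x : Fin r → K}
    (hx : LinearIndependent (ZMod p) x) : (mooreMatrix p x).det ≠ 0 := by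
  rw [← Matrix.det_transpose, Ne, ← Matrix.exists_mulVec_eq_zero_iff]
  rintro ⟨v, hv0, hv⟩
  rw [mooreMatrix_transpose_mulVec] at hv
  refine hv0 ((linearizedPoly_eq_zero_iff v (Fact.out : p.Prime).one_lt).mp ?_)
  exact linearizedPoly_eq_zero_of_eval_eq_zero hx fun j => congrFun hv j

theorem det_mooreMatrix_ne_zero_iff (x : Fin r → K) :
    (mooreMatrix p x).det ≠ 0 ↔ LinearIndependent (ZMod p) x :=
  ⟨linearIndependent_of_det_mooreMatrix_ne_zero, det_mooreMatrix_ne_zero_of_linearIndependent⟩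

end MooreMatrix

/-- The Moore determinant `Δ(x₁, …, x_r)` is nonzero iff `x₁, …, x_r` are
linearly independent over the prime field `𝔽_p`. -/
theorem stmt_12 (p : ℕ) [Fact p.Prime] (K : Type*) [Field K] [CharP K p]
    (r : ℕ) (x : Fin r → K) :
    (mooreMatrix p x).det ≠ 0 ↔
      (letI := ZMod.algebra K p; LinearIndependent (ZMod p) x) :=
  letI := ZMod.algebra K p
  det_mooreMatrix_ne_zero_iff x
end

section
/- Let G be a finite group and n a positive integer. For every commutative ring A, the set of group homomorphisms from G to the group L_n(A) of lower unitriangular n×n matrices over A is in natural bijection with the set of ring homomorphisms from the commutative ring k[G,n] (the polynomial k-algebra on variables X_{ij}^g, g ∈ G, 1 ≤ j < i ≤ n, modulo the relations X_{ij}^e = 0 for i ≠ j and X_{ij}^{gh} = ∑_{l} X_{il}^g X_{lj}^h where X_{ii}^g := 1 and X_{ij}^g := 0 for i < j) to A, for A a commutative k-algebra. -/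
/-!
`k[G,n]` is a quotient of a polynomial algebra by the span of a set of relations, so `k`-algebra
maps `k[G,n] → A` are the same as points `x : G × Fin n × Fin n → A` at which every relation
vanishes. Reading `x` as a family of matrices `ρ g = (x (g, i, j))ᵢⱼ`, the four kinds of relations
say, entry by entry, that each `ρ g` is lower unitriangular, that `ρ 1 = 1` and that
`ρ (g * h) = ρ g * ρ h`.
-/

open MvPolynomial

section QuotientAlgHom

variable {R σ A : Type*} [CommRing R] [CommRing A] [Algebra R A]

theorem MvPolynomial.comp_mkₐ_eq_aeval {I : Ideal (MvPolynomial σ R)}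
    (f : (MvPolynomial σ R ⧸ I) →ₐ[R] A) :
    f.comp (Ideal.Quotient.mkₐ R I) = aeval fun v => f (Ideal.Quotient.mk I (X v)) :=
  algHom_ext fun v => by rw [aeval_X]; rfl

theorem MvPolynomial.bijOn_quotient_span_algHom (S : Set (MvPolynomial σ R)) :
    Set.BijOn
      (fun (f : (MvPolynomial σ R ⧸ Ideal.span S) →ₐ[R] A) v => f (Ideal.Quotient.mk _ (X v)))
      Set.univ {x | ∀ q ∈ S, aeval x q = 0} := by
  refine ⟨fun f _ q hq => ?_, fun f _ f' _ h => ?_, fun x hx => ?_⟩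
  · rw [← comp_mkₐ_eq_aeval, AlgHom.comp_apply, Ideal.Quotient.mkₐ_eq_mk,
      Ideal.Quotient.eq_zero_iff_mem.mpr (Ideal.subset_span hq), map_zero]
  · refine Ideal.Quotient.algHom_ext R ?_
    rw [comp_mkₐ_eq_aeval, comp_mkₐ_eq_aeval]
    exact congrArg aeval h
  · have hker : Ideal.span S ≤ RingHom.ker (aeval x) := Ideal.span_le.mpr hx
    exact ⟨Ideal.Quotient.liftₐ _ (aeval x) hker, trivial, _root_.funext (aeval_X x)⟩

end QuotientAlgHom

section Unitriangular

def unitriangularRelations (k G : Type*) [CommRing k] [Monoid G] (n : ℕ) :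
    Set (MvPolynomial (G × Fin n × Fin n) k) :=
  {q | ∃ (g : G) (i : Fin n), q = X (g, i, i) - 1} ∪
    {q | ∃ (g : G) (i j : Fin n), i < j ∧ q = X (g, i, j)} ∪
    {q | ∃ (i j : Fin n), i ≠ j ∧ q = X ((1 : G), i, j)} ∪
    {q | ∃ (g h : G) (i j : Fin n),
      q = X (g * h, i, j) - ∑ l : Fin n, X (g, i, l) * X (h, l, j)}

def lowerUnitriangularReps (G A : Type*) [Monoid G] [Semiring A] (n : ℕ) :
    Set (G → Matrix (Fin n) (Fin n) A) :=
  {ρ | ρ 1 = 1 ∧ (∀ g h : G, ρ (g * h) = ρ g * ρ h) ∧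
    ∀ g : G, (∀ i j : Fin n, i < j → ρ g i j = 0) ∧ ∀ i : Fin n, ρ g i i = 1}

def matrixFamilyEquiv (G A : Type*) (n : ℕ) :
    (G × Fin n × Fin n → A) ≃ (G → Matrix (Fin n) (Fin n) A) where
  toFun x g := Matrix.of fun i j => x (g, i, j)
  invFun ρ v := ρ v.1 v.2.1 v.2.2
  left_inv _ := rfl
  right_inv _ := rfl

variable {G A : Type*} [Monoid G] {n : ℕ}

theorem aeval_unitriangularRelations_eq_zero_iff (k : Type*) [CommRing k] [CommRing A]
    [Algebra k A] (x : G × Fin n × Fin n → A) :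
    (∀ q ∈ unitriangularRelations k G n, aeval x q = 0) ↔
      (∀ g i, x (g, i, i) = 1) ∧ (∀ g i j, i < j → x (g, i, j) = 0) ∧
      (∀ i j, i ≠ j → x (1, i, j) = 0) ∧
      ∀ g h i j, x (g * h, i, j) = ∑ l, x (g, i, l) * x (h, l, j) := by
  constructor
  · intro h
    refine ⟨fun g i => ?_, fun g i j hij => ?_, fun i j hij => ?_, fun g h' i j => ?_⟩
    · simpa [sub_eq_zero] using h _ (Or.inl (Or.inl (Or.inl ⟨g, i, rfl⟩)))
    · simpa using h _ (Or.inl (Or.inl (Or.inr ⟨g, i, j, hij, rfl⟩)))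
    · simpa using h _ (Or.inl (Or.inr ⟨i, j, hij, rfl⟩))
    · simpa [sub_eq_zero] using h _ (Or.inr ⟨g, h', i, j, rfl⟩)
  · rintro ⟨hdiag, hupper, hone, hmul⟩ q
      (((⟨g, i, rfl⟩ | ⟨g, i, j, hij, rfl⟩) | ⟨i, j, hij, rfl⟩) | ⟨g, h, i, j, rfl⟩) <;>
      simp [*]

theorem mem_lowerUnitriangularReps_iff [Semiring A] (ρ : G → Matrix (Fin n) (Fin n) A) :
    ρ ∈ lowerUnitriangularReps G A n ↔
      (∀ g i, ρ g i i = 1) ∧ (∀ g i j, i < j → ρ g i j = 0) ∧ (∀ i j, i ≠ j → ρ 1 i j = 0) ∧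
      ∀ g h i j, ρ (g * h) i j = ∑ l, ρ g i l * ρ h l j := by
  simp only [lowerUnitriangularReps, Set.mem_ofPred_eq, ← Matrix.ext_iff, Matrix.mul_apply,
    forall_and]
  constructor
  · rintro ⟨hone, hmul, hupper, hdiag⟩
    exact ⟨hdiag, hupper, fun i j hij => (hone i j).trans (Matrix.one_apply_ne hij), hmul⟩
  · rintro ⟨hdiag, hupper, hone, hmul⟩
    refine ⟨fun i j => ?_, hmul, hupper, hdiag⟩
    rcases eq_or_ne i j with rfl | hij
    · rw [hdiag, Matrix.one_apply_eq]
    · rw [hone i j hij, Matrix.one_apply_ne hij]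

theorem matrixFamilyEquiv_mem_lowerUnitriangularReps_iff (k : Type*) [CommRing k] [CommRing A]
    [Algebra k A] (x : G × Fin n × Fin n → A) :
    matrixFamilyEquiv G A n x ∈ lowerUnitriangularReps G A n ↔
      ∀ q ∈ unitriangularRelations k G n, aeval x q = 0 :=
  (mem_lowerUnitriangularReps_iff _).trans (aeval_unitriangularRelations_eq_zero_iff k x).symm

end Unitriangular

theorem stmt_16_general (k : Type*) [Field k] (G : Type*) [Group G]
    (n : ℕ) (A : Type*) [CommRing A] [Algebra k A] :
    let ι := G × Fin n × Fin n
    let P := MvPolynomial ι k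
    let I : Ideal P := Ideal.span
      ({q : P | ∃ (g : G) (i : Fin n), q = X (g, i, i) - 1} ∪
       {q : P | ∃ (g : G) (i j : Fin n), i < j ∧ q = X (g, i, j)} ∪
       {q : P | ∃ (i j : Fin n), i ≠ j ∧ q = X ((1 : G), i, j)} ∪
       {q : P | ∃ (g h : G) (i j : Fin n),
          q = X (g * h, i, j) - ∑ l : Fin n, X (g, i, l) * X (h, l, j)})
    let Φ : ((P ⧸ I) →ₐ[k] A) → (G → Matrix (Fin n) (Fin n) A) :=
      fun f g => Matrix.of fun i j => f (Ideal.Quotient.mk I (X (g, i, j)))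
    Set.BijOn Φ Set.univ
      {ρ : G → Matrix (Fin n) (Fin n) A |
        ρ 1 = 1 ∧ (∀ g h : G, ρ (g * h) = ρ g * ρ h) ∧
        ∀ g : G, (∀ i j : Fin n, i < j → ρ g i j = 0) ∧ ∀ i : Fin n, ρ g i i = 1} := by
  intro ι P I Φ
  exact (Equiv.bijOn _ (matrixFamilyEquiv_mem_lowerUnitriangularReps_iff k)).comp
    (bijOn_quotient_span_algHom (unitriangularRelations k G n))

/-- Universal property of `k[G,n]`: for a finite group `G` and a commutative
`k`-algebra `A`, `k`-algebra homomorphisms `k[G,n] → A` correspond bijectively to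
group homomorphisms `G → L_n(A)` into the lower unitriangular matrices, via
`f ↦ (g ↦ (f(X_{ij}^g)))`. Here `k[G,n]` is presented as the polynomial algebra on
variables `X_{ij}^g` modulo the relations `X_{ii}^g = 1`, `X_{ij}^g = 0` for `i < j`,
`X_{ij}^e = 0` for `i ≠ j`, and `X_{ij}^{gh} = ∑_l X_{il}^g X_{lj}^h`. -/
theorem stmt_16 (k : Type*) [Field k] (G : Type*) [Group G] [Finite G]
    (n : ℕ) (hn : 0 < n) (A : Type*) [CommRing A] [Algebra k A] :
    let ι := G × Fin n × Fin n
    let P := MvPolynomial ι k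
    let I : Ideal P := Ideal.span
      ({q : P | ∃ (g : G) (i : Fin n), q = X (g, i, i) - 1} ∪
       {q : P | ∃ (g : G) (i j : Fin n), i < j ∧ q = X (g, i, j)} ∪
       {q : P | ∃ (i j : Fin n), i ≠ j ∧ q = X ((1 : G), i, j)} ∪
       {q : P | ∃ (g h : G) (i j : Fin n),
          q = X (g * h, i, j) - ∑ l : Fin n, X (g, i, l) * X (h, l, j)})
    let Φ : ((P ⧸ I) →ₐ[k] A) → (G → Matrix (Fin n) (Fin n) A) :=
      fun f g => Matrix.of fun i j => f (Ideal.Quotient.mk I (X (g, i, j)))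
    Set.BijOn Φ Set.univ
      {ρ : G → Matrix (Fin n) (Fin n) A |
        ρ 1 = 1 ∧ (∀ g h : G, ρ (g * h) = ρ g * ρ h) ∧
        ∀ g : G, (∀ i j : Fin n, i < j → ρ g i j = 0) ∧ ∀ i : Fin n, ρ g i i = 1} :=
  stmt_16_general k G n A
end
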